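/- Consider the spatially homogeneous semi-implicit prediction step: C_v (U^{n+1} − U^n)/Δt = (4σ(T^n)³/ε²)(ρ − ac U^{n+1}) with ρ, U^n ≥ 0 given, and constants C_v, a, c, σ, Δt, ε > 0, T^n ≥ 0. Then U^{n+1} is uniquely determined, nonnegative, and satisfies U^{n+1} = ρ/(ac) + O(ε²) as ε → 0; precisely, |U^{n+1} − ρ/(ac)| ≤ (ε² C_v |ρ/(ac) − U^n|)/(ε² C_v + 4Δt σ (T^n)³ a c) whenever T^n > 0. -/
import Mathlib


theorem stmt_4 (Cv a c σ Δt ε ρ Un Tn : ℝ)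
    (hC : 0 < Cv) (ha : 0 < a) (hc : 0 < c) (hσ : 0 < σ) (hΔt : 0 < Δt)
    (hε : 0 < ε) (hρ : 0 ≤ ρ) (hUn : 0 ≤ Un) (hTn : 0 ≤ Tn) :
    (∃! U : ℝ, Cv * (U - Un) / Δt = (4 * σ * Tn ^ 3 / ε ^ 2) * (ρ - a * c * U)) ∧
    (∀ U : ℝ, Cv * (U - Un) / Δt = (4 * σ * Tn ^ 3 / ε ^ 2) * (ρ - a * c * U) →
      0 ≤ U ∧
      (0 < Tn →
        |U - ρ / (a * c)| ≤
          ε ^ 2 * Cv * |ρ / (a * c) - Un| /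
            (ε ^ 2 * Cv + 4 * Δt * σ * Tn ^ 3 * a * c))) := by
  have hT3 : 0 ≤ Tn ^ 3 := by positivity
  have hD : 0 < Cv * ε ^ 2 + 4 * σ * Tn ^ 3 * Δt * (a * c) := by positivity
  have hε2 : (ε : ℝ) ^ 2 ≠ 0 := by positivity
  have key : ∀ U : ℝ,
      Cv * (U - Un) / Δt = (4 * σ * Tn ^ 3 / ε ^ 2) * (ρ - a * c * U) ↔
      U * (Cv * ε ^ 2 + 4 * σ * Tn ^ 3 * Δt * (a * c)) =
        Cv * Un * ε ^ 2 + 4 * σ * Tn ^ 3 * Δt * ρ := by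
    intro U
    rw [div_eq_iff hΔt.ne',
      show (4 * σ * Tn ^ 3 / ε ^ 2) * (ρ - a * c * U) * Δt =
        (4 * σ * Tn ^ 3 * (ρ - a * c * U) * Δt) / ε ^ 2 from by ring,
      eq_div_iff hε2]
    constructor <;> intro h <;> linear_combination h
  constructor
  · refine ⟨(Cv * Un * ε ^ 2 + 4 * σ * Tn ^ 3 * Δt * ρ) /
      (Cv * ε ^ 2 + 4 * σ * Tn ^ 3 * Δt * (a * c)), ?_, ?_⟩
    · simp only [key, div_mul_cancel₀ _ hD.ne']
    · intro U hU
      rw [key] at hU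
      rw [eq_div_iff hD.ne']
      exact hU
  · intro U hU
    rw [key] at hU
    have hUeq : U = (Cv * Un * ε ^ 2 + 4 * σ * Tn ^ 3 * Δt * ρ) /
        (Cv * ε ^ 2 + 4 * σ * Tn ^ 3 * Δt * (a * c)) := by
      rw [eq_div_iff hD.ne']; exact hU
    constructor
    · rw [hUeq]; positivity
    · intro hTnpos
      have hD' : 0 < ε ^ 2 * Cv + 4 * Δt * σ * Tn ^ 3 * a * c := by positivity
      have hac : (a * c) ≠ 0 := by positivity
      have hinv : ρ / (a * c) * (a * c) = ρ := div_mul_cancel₀ ρ hac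
      have heq : (U - ρ / (a * c)) * (ε ^ 2 * Cv + 4 * Δt * σ * Tn ^ 3 * a * c) =
          ε ^ 2 * Cv * (Un - ρ / (a * c)) := by
        linear_combination hU - 4 * σ * Tn ^ 3 * Δt * hinv
      have heq2 : U - ρ / (a * c) =
          ε ^ 2 * Cv * (Un - ρ / (a * c)) /
            (ε ^ 2 * Cv + 4 * Δt * σ * Tn ^ 3 * a * c) :=
        eq_div_of_mul_eq hD'.ne' heq
      rw [heq2, abs_div, abs_of_pos hD', abs_mul,
        abs_of_pos (by positivity : (0:ℝ) < ε ^ 2 * Cv),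
        abs_sub_comm Un (ρ / (a * c))]
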